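/- arXiv:1508.03278 — 4 statements merged into one kernel-verified Lean document; each statement's English description precedes it below -/
import Mathlib

section
/- Let (X, μ) be a measurable space with finite measure μ, let q ∈ (1, ∞), and let φ : X → (0, ∞) be a measurable function. Define I(φ, q) = inf ∫_X φ · α^q dμ, where the infimum is taken over all measurable functions α : X → [0, ∞] with ∫_X α dμ = 1. Then I(φ, q) = (∫_X φ^{-λ} dμ)^{-1/λ}, where λ = 1/(q-1), and the infimum is attained at ρ = (∫_X φ^{1/(1-q)} dμ)^{-1} · φ^{1/(1-q)}. -/
/-!
Write `λ = 1/(q-1)` and `L = ∫ φ^(-λ)`. Hölder's inequality with exponents `q` and `q/(q-1)`,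
applied to `α = (φ^(1/q) α) · φ^(-1/q)`, gives `(∫ α)^q ≤ (∫ φ α^q) · L^(q-1)`, so every
admissible `α` costs at least `L^(1-q)`. Conversely, any `g ≤ φ^(-λ)` satisfies `φ g^q ≤ g`, so
`g / ∫ g` is admissible with cost at most `(∫ g)^(1-q)`; truncating `φ^(-λ)` at height `n` and
letting `n → ∞` gives the matching upper bound, also when `L = ∞`. When `L < ∞` the bound is
attained by `φ^(-λ) / L`.
-/

open MeasureTheory ENNReal

section

variable {X : Type*} [MeasurableSpace X] {μ : Measure X} {φ : X → ℝ≥0∞} {q : ℝ}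

lemma inv_rpow_mul_self_eq_rpow_one_sub {c : ℝ≥0∞} (hc : c ≠ 0) (hq : 1 < q) :
    c⁻¹ ^ q * c = c ^ (1 - q) := by
  rcases eq_or_ne c ⊤ with rfl | hctop
  · simp [zero_rpow_of_pos (by linarith : 0 < q), top_rpow_of_neg (by linarith : 1 - q < 0)]
  · rw [inv_rpow, ← rpow_neg, sub_eq_neg_add, rpow_add _ _ hc hctop, rpow_one]

lemma mul_rpow_le_self_of_le_rpow_neg {a g : ℝ≥0∞} (ha0 : a ≠ 0) (hatop : a ≠ ⊤) (hq : 1 < q)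
    (hg : g ≤ a ^ (-(1 / (q - 1)))) : a * g ^ q ≤ g := by
  have hq1 : 0 < q - 1 := sub_pos.2 hq
  have hgq : g ^ (q - 1) ≤ a⁻¹ := by
    calc g ^ (q - 1) ≤ (a ^ (-(1 / (q - 1)))) ^ (q - 1) := rpow_le_rpow hg hq1.le
      _ = a⁻¹ := by rw [← rpow_mul, ← rpow_neg_one]; congr 1; field_simp
  calc a * g ^ q = a * (g ^ (q - 1) * g) := by
        conv_lhs => rw [← sub_add_cancel q 1, rpow_add_of_nonneg _ _ hq1.le zero_le_one, rpow_one]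
    _ ≤ a * (a⁻¹ * g) := by gcongr
    _ = g := by rw [← mul_assoc, ENNReal.mul_inv_cancel ha0 hatop, one_mul]

lemma mul_mul_rpow_neg_rpow {a : ℝ≥0∞} (ha0 : a ≠ 0) (hatop : a ≠ ⊤) (hq : 1 < q) (c : ℝ≥0∞) :
    a * (c * a ^ (-(1 / (q - 1)))) ^ q = c ^ q * a ^ (-(1 / (q - 1))) := by
  have hexp : 1 + -(1 / (q - 1)) * q = -(1 / (q - 1)) := by
    have : q - 1 ≠ 0 := by linarith
    field_simp; ring
  rw [mul_rpow_of_nonneg _ _ (by linarith), ← rpow_mul, mul_left_comm]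
  congr 1
  conv_rhs => rw [← hexp, rpow_add _ _ ha0 hatop, rpow_one]

lemma lintegral_rpow_le_lintegral_mul_rpow_mul (hq : 1 < q) (hφm : AEMeasurable φ μ)
    (hφ0 : ∀ᵐ x ∂μ, φ x ≠ 0) (hφtop : ∀ᵐ x ∂μ, φ x ≠ ⊤) {α : X → ℝ≥0∞}
    (hαm : AEMeasurable α μ) :
    (∫⁻ x, α x ∂μ) ^ q ≤
      (∫⁻ x, φ x * α x ^ q ∂μ) * (∫⁻ x, φ x ^ (-(1 / (q - 1))) ∂μ) ^ (q - 1) := by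
  have hq0 : 0 < q := by linarith
  have hq1 : q - 1 ≠ 0 := by linarith
  have hconj := Real.HolderConjugate.conjExponent hq
  have hHolder := lintegral_mul_le_Lp_mul_Lq μ hconj
    ((hφm.pow_const (1 / q)).mul hαm) (hφm.pow_const (-(1 / q)))
  have hα : ∫⁻ x, α x ∂μ =
      ∫⁻ x, ((fun x ↦ φ x ^ (1 / q) * α x) * fun x ↦ φ x ^ (-(1 / q))) x ∂μ := by
    refine lintegral_congr_ae ?_
    filter_upwards [hφ0, hφtop] with x hx0 hxtop
    rw [Pi.mul_apply, mul_right_comm, ← rpow_add _ _ hx0 hxtop, add_neg_cancel, rpow_zero, one_mul]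
  have hf : ∫⁻ x, (φ x ^ (1 / q) * α x) ^ q ∂μ = ∫⁻ x, φ x * α x ^ q ∂μ := by
    congr 1 with x
    rw [mul_rpow_of_nonneg _ _ hq0.le, ← rpow_mul, one_div_mul_cancel hq0.ne', rpow_one]
  have hg : ∫⁻ x, (φ x ^ (-(1 / q))) ^ q.conjExponent ∂μ =
      ∫⁻ x, φ x ^ (-(1 / (q - 1))) ∂μ := by
    congr 1 with x
    rw [← rpow_mul, Real.conjExponent]
    congr 1
    field_simp
  calc (∫⁻ x, α x ∂μ) ^ q
      ≤ ((∫⁻ x, φ x * α x ^ q ∂μ) ^ (1 / q) *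
          (∫⁻ x, φ x ^ (-(1 / (q - 1))) ∂μ) ^ (1 / q.conjExponent)) ^ q := by
        rw [hα, ← hf, ← hg]
        exact rpow_le_rpow hHolder hq0.le
    _ = _ := by
        rw [mul_rpow_of_nonneg _ _ hq0.le, ← rpow_mul, ← rpow_mul, one_div_mul_cancel hq0.ne',
          rpow_one, Real.conjExponent]
        congr 2
        field_simp

noncomputable def weightedInf (μ : Measure X) (φ : X → ℝ≥0∞) (q : ℝ) : ℝ≥0∞ :=
  ⨅ (α : X → ℝ≥0∞) (_ : Measurable α ∧ ∫⁻ x, α x ∂μ = 1), ∫⁻ x, φ x * α x ^ q ∂μ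

lemma rpow_one_sub_le_weightedInf (hq : 1 < q) (hφm : AEMeasurable φ μ)
    (hφ0 : ∀ᵐ x ∂μ, φ x ≠ 0) (hφtop : ∀ᵐ x ∂μ, φ x ≠ ⊤) :
    (∫⁻ x, φ x ^ (-(1 / (q - 1))) ∂μ) ^ (1 - q) ≤ weightedInf μ φ q := by
  refine le_iInf₂ fun α ⟨hαm, hα1⟩ ↦ ?_
  have key := lintegral_rpow_le_lintegral_mul_rpow_mul hq hφm hφ0 hφtop hαm.aemeasurable
  rw [hα1, one_rpow, mul_comm] at key
  rw [show 1 - q = -(q - 1) by ring, rpow_neg, ENNReal.inv_le_iff_le_mul _ _]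
  · exact key
  all_goals rintro - h; rw [h] at key; simp at key

lemma weightedInf_le_rpow_one_sub_of_le (hq : 1 < q) (hφ0 : ∀ᵐ x ∂μ, φ x ≠ 0)
    (hφtop : ∀ᵐ x ∂μ, φ x ≠ ⊤) {g : X → ℝ≥0∞} (hgm : Measurable g)
    (hg : ∀ᵐ x ∂μ, g x ≤ φ x ^ (-(1 / (q - 1)))) (hgtop : ∫⁻ x, g x ∂μ ≠ ⊤) :
    weightedInf μ φ q ≤ (∫⁻ x, g x ∂μ) ^ (1 - q) := by
  set M := ∫⁻ x, g x ∂μ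
  rcases eq_or_ne M 0 with hM0 | hM0
  · simp [hM0, zero_rpow_of_neg (by linarith : 1 - q < 0)]
  refine iInf₂_le_of_le (fun x ↦ M⁻¹ * g x) ⟨hgm.const_mul _, ?_⟩ ?_
  · rw [lintegral_const_mul _ hgm, ENNReal.inv_mul_cancel hM0 hgtop]
  calc ∫⁻ x, φ x * (M⁻¹ * g x) ^ q ∂μ = M⁻¹ ^ q * ∫⁻ x, φ x * g x ^ q ∂μ := by
        rw [← lintegral_const_mul' _ _ (rpow_ne_top_of_nonneg (by linarith) (inv_ne_top.2 hM0))]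
        congr 1 with x
        rw [mul_rpow_of_nonneg _ _ (by linarith)]
        ring
    _ ≤ M⁻¹ ^ q * M := by
        gcongr
        refine lintegral_mono_ae ?_
        filter_upwards [hφ0, hφtop, hg] with x hx0 hxtop hgx
        exact mul_rpow_le_self_of_le_rpow_neg hx0 hxtop hq hgx
    _ = M ^ (1 - q) := inv_rpow_mul_self_eq_rpow_one_sub hM0 hq

lemma weightedInf_le_rpow_one_sub [IsFiniteMeasure μ] (hq : 1 < q) (hφm : Measurable φ)
    (hφ0 : ∀ᵐ x ∂μ, φ x ≠ 0) (hφtop : ∀ᵐ x ∂μ, φ x ≠ ⊤) :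
    weightedInf μ φ q ≤ (∫⁻ x, φ x ^ (-(1 / (q - 1))) ∂μ) ^ (1 - q) := by
  set ψ := fun x ↦ φ x ^ (-(1 / (q - 1)))
  have hψm : Measurable ψ := hφm.pow_const _
  have htrunc : Filter.Tendsto (fun n : ℕ ↦ ∫⁻ x, min (ψ x) n ∂μ) Filter.atTop
      (nhds (∫⁻ x, ψ x ∂μ)) := by
    have hsup : ∀ x, ⨆ n : ℕ, min (ψ x) n = ψ x := fun x ↦ by
      rw [← inf_iSup_eq, iSup_natCast, inf_top_eq]
    have hmono : Monotone fun (n : ℕ) x ↦ min (ψ x) n :=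
      fun m n hmn x ↦ min_le_min_left _ (Nat.cast_le.2 hmn)
    rw [← lintegral_congr hsup, lintegral_iSup (fun n ↦ hψm.min measurable_const) hmono]
    exact tendsto_atTop_iSup fun m n hmn ↦ lintegral_mono (hmono hmn)
  refine ge_of_tendsto' ((continuous_rpow_const.tendsto _).comp htrunc) fun n ↦ ?_
  have hfin : ∫⁻ x, min (ψ x) n ∂μ ≠ ⊤ := by
    refine ne_top_of_le_ne_top ?_ (lintegral_mono fun x ↦ min_le_right _ (n : ℝ≥0∞))
    rw [lintegral_const]
    exact mul_ne_top (natCast_ne_top n) (measure_ne_top _ _)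
  exact weightedInf_le_rpow_one_sub_of_le hq hφ0 hφtop (hψm.min measurable_const)
    (ae_of_all _ fun x ↦ min_le_left _ _) hfin

lemma lintegral_ne_zero_of_ae_ne_zero (hμ : μ ≠ 0) {f : X → ℝ≥0∞} (hfm : AEMeasurable f μ)
    (hf : ∀ᵐ x ∂μ, f x ≠ 0) : ∫⁻ x, f x ∂μ ≠ 0 := by
  have := ae_neBot.2 hμ
  intro h
  obtain ⟨x, hx0, hx⟩ := (((lintegral_eq_zero_iff' hfm).1 h).and hf).exists
  exact hx hx0

lemma lintegral_rpow_neg_ne_zero (hq : 1 < q) (hμ : μ ≠ 0) (hφm : AEMeasurable φ μ)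
    (hφtop : ∀ᵐ x ∂μ, φ x ≠ ⊤) : ∫⁻ x, φ x ^ (-(1 / (q - 1))) ∂μ ≠ 0 := by
  refine lintegral_ne_zero_of_ae_ne_zero hμ (hφm.pow_const _) ?_
  filter_upwards [hφtop] with x hx
  simp [rpow_eq_zero_iff, hx, hq.le]

noncomputable def weightedMinimizer (μ : Measure X) (φ : X → ℝ≥0∞) (q : ℝ) (x : X) : ℝ≥0∞ :=
  (∫⁻ y, φ y ^ (-(1 / (q - 1))) ∂μ)⁻¹ * φ x ^ (-(1 / (q - 1)))

lemma lintegral_weightedMinimizer (hq : 1 < q) (hμ : μ ≠ 0) (hφm : AEMeasurable φ μ)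
    (hφtop : ∀ᵐ x ∂μ, φ x ≠ ⊤) (hL : ∫⁻ x, φ x ^ (-(1 / (q - 1))) ∂μ ≠ ⊤) :
    ∫⁻ x, weightedMinimizer μ φ q x ∂μ = 1 := by
  unfold weightedMinimizer
  rw [lintegral_const_mul'' _ (hφm.pow_const _),
    ENNReal.inv_mul_cancel (lintegral_rpow_neg_ne_zero hq hμ hφm hφtop) hL]

lemma lintegral_mul_weightedMinimizer_rpow (hq : 1 < q) (hμ : μ ≠ 0) (hφm : AEMeasurable φ μ)
    (hφ0 : ∀ᵐ x ∂μ, φ x ≠ 0) (hφtop : ∀ᵐ x ∂μ, φ x ≠ ⊤) :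
    ∫⁻ x, φ x * weightedMinimizer μ φ q x ^ q ∂μ =
      (∫⁻ x, φ x ^ (-(1 / (q - 1))) ∂μ) ^ (1 - q) := by
  set L := ∫⁻ x, φ x ^ (-(1 / (q - 1))) ∂μ
  have hL0 : L ≠ 0 := lintegral_rpow_neg_ne_zero hq hμ hφm hφtop
  calc ∫⁻ x, φ x * weightedMinimizer μ φ q x ^ q ∂μ
      = ∫⁻ x, L⁻¹ ^ q * φ x ^ (-(1 / (q - 1))) ∂μ := by
        refine lintegral_congr_ae ?_
        filter_upwards [hφ0, hφtop] with x hx0 hxtop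
        exact mul_mul_rpow_neg_rpow hx0 hxtop hq _
    _ = L⁻¹ ^ q * L := lintegral_const_mul'' _ (hφm.pow_const _)
    _ = L ^ (1 - q) := inv_rpow_mul_self_eq_rpow_one_sub hL0 hq

end

/-- Proposition (inf of weighted `q`-integrals): for a finite measure `μ`, `q > 1`,
and measurable `φ : X → (0,∞)`, the infimum of `∫ φ · α^q dμ` over measurable `α ≥ 0`
with `∫ α dμ = 1` equals `(∫ φ^{-λ} dμ)^{-1/λ}` with `λ = 1/(q-1)`, and it is attained
at `ρ = (∫ φ^{1/(1-q)} dμ)⁻¹ · φ^{1/(1-q)}`. -/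
theorem inf_weighted_integral {X : Type*} [MeasurableSpace X] (μ : Measure X)
    [IsFiniteMeasure μ] (hμ : μ ≠ 0) (q : ℝ) (hq : 1 < q)
    (φ : X → ℝ≥0∞) (hφm : Measurable φ) (hφ : ∀ x, φ x ≠ 0 ∧ φ x ≠ ⊤) :
    (⨅ (α : X → ℝ≥0∞) (_ : Measurable α ∧ ∫⁻ x, α x ∂μ = 1),
        ∫⁻ x, φ x * α x ^ q ∂μ)
      = (∫⁻ x, φ x ^ (-(1 / (q - 1))) ∂μ) ^ (-(1 : ℝ) / (1 / (q - 1)))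
    ∧ (∀ ρ : X → ℝ≥0∞,
        ρ = (fun x => (∫⁻ y, φ y ^ ((1 : ℝ) / (1 - q)) ∂μ)⁻¹ * φ x ^ ((1 : ℝ) / (1 - q))) →
        ((∫⁻ y, φ y ^ ((1 : ℝ) / (1 - q)) ∂μ ≠ ⊤ → ∫⁻ x, ρ x ∂μ = 1)
          ∧ ∫⁻ x, φ x * ρ x ^ q ∂μ
              = (∫⁻ x, φ x ^ (-(1 / (q - 1))) ∂μ) ^ (-(1 : ℝ) / (1 / (q - 1))))) := by
  have hq1 : q - 1 ≠ 0 := by linarith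
  have hexp : -(1 : ℝ) / (1 / (q - 1)) = 1 - q := by field_simp; ring
  have hexp' : (1 : ℝ) / (1 - q) = -(1 / (q - 1)) := by rw [← neg_sub, div_neg]
  have hφ0 : ∀ᵐ x ∂μ, φ x ≠ 0 := ae_of_all _ fun x ↦ (hφ x).1
  have hφtop : ∀ᵐ x ∂μ, φ x ≠ ⊤ := ae_of_all _ fun x ↦ (hφ x).2
  rw [hexp, hexp']
  refine ⟨le_antisymm (weightedInf_le_rpow_one_sub hq hφm hφ0 hφtop)
    (rpow_one_sub_le_weightedInf hq hφm.aemeasurable hφ0 hφtop), ?_⟩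
  rintro ρ rfl
  exact ⟨lintegral_weightedMinimizer hq hμ hφm.aemeasurable hφtop,
    lintegral_mul_weightedMinimizer_rpow hq hμ hφm.aemeasurable hφ0 hφtop⟩
end

section
/- Let γ : [a, b] → ℝⁿ be a rectifiable curve and let l_γ : [a, b] → ℝ be its length function, l_γ(t) = length of γ|_{[a,t]}. Then for almost every t ∈ [a, b], both l_γ'(t) and γ'(t) exist and l_γ'(t) = |γ'(t)|. -/
/-!
Write `V t` for the length of `f` on `[a, t]`. The chord bound `‖f s - f t‖ ≤ V s - V t` gives
`‖f'‖ ≤ V'` wherever both derivatives exist. For the reverse inequality take partitions `u k` of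
`[a, b]` whose inscribed polygons have length within `2⁻ᵏ` of `V b`, and let `P k t` add up, over
the cells of `u k`, how much the length of `f` from the left end of the cell up to `t` exceeds the
corresponding chord. Each `P k` is monotone with total increase below `2⁻ᵏ`, so integrating
`∑ₖ (P k)'` (Fubini's argument) shows `(P k)' → 0` almost everywhere. Inside a cell,
`V s - V t ≤ P k s - P k t + ‖f s - f t‖`, whence `V' ≤ (P k)' + ‖f'‖ → ‖f'‖`.
-/

open Set MeasureTheory Filter Topology

section RightSlope
variable {E : Type*} [NormedAddCommGroup E] [NormedSpace ℝ E] {F G : ℝ → ℝ} {g : ℝ → E}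
  {t ℓ d : ℝ} {v : E}

lemma norm_slope_of_lt {s : ℝ} (hts : t < s) : ‖slope g t s‖ = ‖g s - g t‖ / (s - t) := by
  rw [slope_def_module, norm_smul, Real.norm_of_nonneg (inv_nonneg.2 (sub_pos.2 hts).le),
    inv_mul_eq_div]

lemma HasDerivWithinAt.tendsto_slope_Ioi (hg : HasDerivWithinAt g v (Ioi t) t) :
    Tendsto (slope g t) (𝓝[>] t) (𝓝 v) :=
  (hasDerivWithinAt_iff_tendsto_slope' (lt_irrefl t)).1 hg

lemma norm_le_of_hasDerivWithinAt_Ioi (hF : HasDerivWithinAt F ℓ (Ioi t) t)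
    (hg : HasDerivWithinAt g v (Ioi t) t) (h : ∀ᶠ s in 𝓝[>] t, ‖g s - g t‖ ≤ F s - F t) :
    ‖v‖ ≤ ℓ := by
  refine le_of_tendsto_of_tendsto hg.tendsto_slope_Ioi.norm hF.tendsto_slope_Ioi ?_
  filter_upwards [h, self_mem_nhdsWithin] with s hs (hts : t < s)
  rw [norm_slope_of_lt hts, slope_def_field]
  exact div_le_div_of_nonneg_right hs (sub_pos.2 hts).le

lemma le_add_norm_of_hasDerivWithinAt_Ioi (hF : HasDerivWithinAt F ℓ (Ioi t) t)
    (hG : HasDerivWithinAt G d (Ioi t) t) (hg : HasDerivWithinAt g v (Ioi t) t)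
    (h : ∀ᶠ s in 𝓝[>] t, F s - F t ≤ G s - G t + ‖g s - g t‖) : ℓ ≤ d + ‖v‖ := by
  refine le_of_tendsto_of_tendsto hF.tendsto_slope_Ioi
    (hG.tendsto_slope_Ioi.add hg.tendsto_slope_Ioi.norm) ?_
  filter_upwards [h, self_mem_nhdsWithin] with s hs (hts : t < s)
  rw [norm_slope_of_lt hts, slope_def_field, slope_def_field, ← add_div]
  exact div_le_div_of_nonneg_right hs (sub_pos.2 hts).le

end RightSlope

section MonotoneDeriv
variable {f : ℝ → ℝ} {a b : ℝ}

lemma MonotoneOn.deriv_nonneg_of_mem_Ioo (hf : MonotoneOn f (Icc a b)) {t : ℝ}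
    (ht : t ∈ Ioo a b) : 0 ≤ deriv f t := by
  rw [← derivWithin_of_mem_nhds (Icc_mem_nhds ht.1 ht.2)]
  exact hf.derivWithin_nonneg

lemma MonotoneOn.lintegral_ofReal_deriv_le (hf : MonotoneOn f (Icc a b)) (hab : a ≤ b) :
    ∫⁻ t in Ioo a b, ENNReal.ofReal (deriv f t) ≤ ENNReal.ofReal (f b - f a) := by
  have hf' : MonotoneOn f (uIcc a b) := uIcc_of_le hab ▸ hf
  have hint : IntegrableOn (deriv f) (Ioc a b) :=
    (intervalIntegrable_iff_integrableOn_Ioc_of_le hab).1 hf'.intervalIntegrable_deriv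
  have hpos : 0 ≤ᵐ[volume.restrict (Ioc a b)] deriv f := by
    rw [← restrict_Ioo_eq_restrict_Ioc]
    exact (ae_restrict_iff' measurableSet_Ioo).2 (Eventually.of_forall fun t =>
      hf.deriv_nonneg_of_mem_Ioo)
  rw [restrict_Ioo_eq_restrict_Ioc, ← ofReal_integral_eq_lintegral_ofReal hint hpos,
    ← intervalIntegral.integral_of_le hab]
  have hmem := hf'.intervalIntegral_deriv_mem_uIcc
  rw [uIcc_of_le (sub_nonneg.2 (hf (left_mem_Icc.2 hab) (right_mem_Icc.2 hab) hab))] at hmem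
  exact ENNReal.ofReal_le_ofReal hmem.2

end MonotoneDeriv

theorem ae_tendsto_deriv_zero_of_summable {f : ℕ → ℝ → ℝ} {a b : ℝ}
    (hf : ∀ k, MonotoneOn (f k) (Icc a b)) (hsum : Summable fun k => f k b - f k a) :
    ∀ᵐ t ∂volume.restrict (Ioo a b),
      (∀ k, DifferentiableAt ℝ (f k) t) ∧ Tendsto (fun k => deriv (f k) t) atTop (𝓝 0) := by
  rcases le_or_gt b a with hba | hab
  · simp [Ioo_eq_empty_of_le hba]
  have hmeas : ∀ k, AEMeasurable (fun t => ENNReal.ofReal (deriv (f k) t))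
      (volume.restrict (Ioo a b)) := fun k => (measurable_deriv (f k)).ennreal_ofReal.aemeasurable
  have htsum : ∫⁻ t in Ioo a b, ∑' k, ENNReal.ofReal (deriv (f k) t) ≠ ⊤ := by
    rw [lintegral_tsum hmeas]
    refine ne_top_of_le_ne_top ?_
      (ENNReal.tsum_le_tsum fun k => (hf k).lintegral_ofReal_deriv_le hab.le)
    rw [← ENNReal.ofReal_tsum_of_nonneg (fun k => sub_nonneg.2
      (hf k (left_mem_Icc.2 hab.le) (right_mem_Icc.2 hab.le) hab.le)) hsum]
    exact ENNReal.ofReal_ne_top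
  have hdiff : ∀ k, ∀ᵐ t ∂volume.restrict (Ioo a b), DifferentiableAt ℝ (f k) t := fun k =>
    (ae_restrict_iff' measurableSet_Ioo).2 <| (hf k).ae_differentiableWithinAt_of_mem.mono
      fun t ht ht' => (ht (Ioo_subset_Icc_self ht')).differentiableAt (Icc_mem_nhds ht'.1 ht'.2)
  filter_upwards [ae_all_iff.2 hdiff, ae_lt_top' (AEMeasurable.tsum hmeas) htsum,
    ae_restrict_mem measurableSet_Ioo] with t hdt hfin ht
  refine ⟨hdt, ?_⟩
  simpa only [ENNReal.toReal_ofReal ((hf _).deriv_nonneg_of_mem_Ioo ht)] using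
    (ENNReal.summable_toReal hfin.ne).tendsto_atTop_zero

section Partition
variable {α : Type*} [LinearOrder α] {a b : α}

lemma eVariationOn.exists_partition_endpoints_sum_le {E : Type*} [PseudoEMetricSpace E]
    {f : α → E} {u : ℕ → α} (hu : Monotone u) (hus : ∀ i, u i ∈ Icc a b) (m : ℕ) :
    ∃ v : ℕ → α, Monotone v ∧ (∀ i, v i ∈ Icc a b) ∧ v 0 = a ∧ v (m + 2) = b ∧
      ∑ i ∈ Finset.range m, edist (f (u (i + 1))) (f (u i))
        ≤ ∑ i ∈ Finset.range (m + 2), edist (f (v (i + 1))) (f (v i)) := by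
  have hab : a ≤ b := (hus 0).1.trans (hus 0).2
  set v : ℕ → α := fun i => if i = 0 then a else if i ≤ m + 1 then u (i - 1) else b
  have hv : ∀ i ≤ m, v (i + 1) = u i := fun i hi => by simp [v, hi]
  refine ⟨v, fun i j hij => ?_, fun i => ?_, rfl, by simp [v], ?_⟩
  · simp only [v]
    split_ifs <;> first
      | exact le_rfl | exact hab | exact (hus _).1 | exact (hus _).2 | exact hu (by omega) | omega
  · simp only [v]
    split_ifs
    exacts [left_mem_Icc.2 hab, hus _, right_mem_Icc.2 hab]
  · rw [Finset.sum_range_succ', Finset.sum_range_succ]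
    calc ∑ i ∈ Finset.range m, edist (f (u (i + 1))) (f (u i))
        = ∑ i ∈ Finset.range m, edist (f (v (i + 1 + 1))) (f (v (i + 1))) :=
          Finset.sum_congr rfl fun i hi => by
            rw [hv i (by simp at hi; omega), hv (i + 1) (by simp at hi; omega)]
      _ ≤ _ := le_add_right (le_add_right le_rfl)

theorem eVariationOn.exists_partition_lt_sum_add {E : Type*} [PseudoEMetricSpace E] {f : α → E}
    (hab : a ≤ b) (hfin : eVariationOn f (Icc a b) ≠ ⊤) {ε : ENNReal} (hε : ε ≠ 0) :
    ∃ m, ∃ u : ℕ → α, Monotone u ∧ (∀ i, u i ∈ Icc a b) ∧ u 0 = a ∧ u m = b ∧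
      eVariationOn f (Icc a b) < ∑ i ∈ Finset.range m, edist (f (u (i + 1))) (f (u i)) + ε := by
  have : Nonempty {u : ℕ → α // Monotone u ∧ ∀ i, u i ∈ Icc a b} :=
    ⟨⟨fun _ => a, monotone_const, fun _ => left_mem_Icc.2 hab⟩⟩
  have hlt : eVariationOn f (Icc a b) < eVariationOn f (Icc a b) + ε :=
    ENNReal.lt_add_right hfin hε
  rw [eVariationOn, ENNReal.iSup_add, lt_iSup_iff] at hlt
  obtain ⟨⟨n, w, hw, hws⟩, hn⟩ := hlt
  obtain ⟨v, hv, hvs, hv0, hvn, hsum⟩ := exists_partition_endpoints_sum_le (f := f) hw hws n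
  exact ⟨n + 2, v, hv, hvs, hv0, hvn, hn.trans_le (by gcongr)⟩

theorem variationOnFromTo.exists_partition_sub_sum_lt {E : Type*} [PseudoMetricSpace E]
    {f : α → E} (hab : a ≤ b) (hf : BoundedVariationOn f (Icc a b)) {ε : ℝ} (hε : 0 < ε) :
    ∃ m, ∃ u : ℕ → α, Monotone u ∧ (∀ i, u i ∈ Icc a b) ∧ u 0 = a ∧ u m = b ∧
      variationOnFromTo f (Icc a b) a b - ∑ i ∈ Finset.range m, dist (f (u (i + 1))) (f (u i))
        < ε := by
  obtain ⟨m, u, hu, hus, hu0, hum, hlt⟩ :=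
    eVariationOn.exists_partition_lt_sum_add hab hf (ENNReal.ofReal_pos.2 hε).ne'
  refine ⟨m, u, hu, hus, hu0, hum, ?_⟩
  have hsum_ne_top : ∑ i ∈ Finset.range m, edist (f (u (i + 1))) (f (u i)) ≠ ⊤ :=
    ENNReal.sum_ne_top.2 fun _ _ => edist_ne_top _ _
  have hreal := ENNReal.toReal_strict_mono
    (ENNReal.add_ne_top.2 ⟨hsum_ne_top, ENNReal.ofReal_ne_top⟩) hlt
  rw [ENNReal.toReal_add hsum_ne_top ENNReal.ofReal_ne_top, ENNReal.toReal_ofReal hε.le,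
    ENNReal.toReal_sum fun _ _ => edist_ne_top _ _] at hreal
  rw [variationOnFromTo.eq_of_le _ _ hab, inter_self, sub_lt_iff_lt_add']
  simpa only [dist_edist] using hreal

end Partition

section Defect
variable {α : Type*} [LinearOrder α] {E : Type*} [PseudoMetricSpace E] {f : α → E} {s : Set α}

lemma variationOnFromTo.dist_le (hf : LocallyBoundedVariationOn f s) {x y : α} (hx : x ∈ s)
    (hy : y ∈ s) (hxy : x ≤ y) : dist (f y) (f x) ≤ variationOnFromTo f s x y := by
  rw [variationOnFromTo.eq_of_le f s hxy, dist_edist]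
  exact ENNReal.toReal_mono (hf x y hx hy)
    (eVariationOn.edist_le f ⟨hy, hxy, le_rfl⟩ ⟨hx, le_rfl, hxy⟩)

lemma variationOnFromTo.sum_range (hf : LocallyBoundedVariationOn f s) {u : ℕ → α}
    (hus : ∀ i, u i ∈ s) (m : ℕ) :
    ∑ i ∈ Finset.range m, variationOnFromTo f s (u i) (u (i + 1))
      = variationOnFromTo f s (u 0) (u m) := by
  induction m with
  | zero => simp [variationOnFromTo.self]
  | succ m ih =>
    rw [Finset.sum_range_succ, ih, variationOnFromTo.add hf (hus 0) (hus m) (hus (m + 1))]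

variable (f s) in
noncomputable def chordDefect (p t : α) : ℝ := variationOnFromTo f s p t - dist (f t) (f p)

variable (f s) in
noncomputable def polygonDefect (u : ℕ → α) (m : ℕ) (t : α) : ℝ :=
  ∑ i ∈ Finset.range m, chordDefect f s (u i) (max (u i) (min t (u (i + 1))))

lemma chordDefect_self (p : α) : chordDefect f s p p = 0 := by
  simp [chordDefect, variationOnFromTo.self]

lemma chordDefect_monotoneOn (hf : LocallyBoundedVariationOn f s) {p : α} (hp : p ∈ s) :
    MonotoneOn (chordDefect f s p) (s ∩ Ici p) := by
  rintro x ⟨hx, -⟩ y ⟨hy, -⟩ hxy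
  have := variationOnFromTo.dist_le hf hx hy hxy
  have := dist_triangle (f y) (f x) (f p)
  rw [chordDefect, chordDefect, ← variationOnFromTo.add hf hp hx hy]
  linarith

lemma variationOnFromTo_sub_le_chordDefect_sub (hf : LocallyBoundedVariationOn f s)
    {a p x y : α} (ha : a ∈ s) (hp : p ∈ s) (hx : x ∈ s) (hy : y ∈ s) :
    variationOnFromTo f s a y - variationOnFromTo f s a x
      ≤ chordDefect f s p y - chordDefect f s p x + dist (f y) (f x) := by
  have := dist_triangle (f y) (f x) (f p)
  rw [chordDefect, chordDefect, ← variationOnFromTo.add hf ha hp hx,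
    ← variationOnFromTo.add hf ha hp hy]
  linarith

lemma monotone_chordDefect_clamp (hf : LocallyBoundedVariationOn f s) (hs : s.OrdConnected)
    {p q : α} (hp : p ∈ s) (hq : q ∈ s) :
    Monotone fun t => chordDefect f s p (max p (min t q)) := by
  have hmem : ∀ t, max p (min t q) ∈ s ∩ Ici p := fun t =>
    ⟨hs.out hp (max_rec' s hp hq) ⟨le_max_left _ _, max_le_max le_rfl (min_le_right _ _)⟩,
      le_max_left _ _⟩
  exact fun x y hxy => chordDefect_monotoneOn hf hp (hmem x) (hmem y) (by gcongr)

variable {u : ℕ → α} {m : ℕ}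

lemma polygonDefect_monotone (hf : LocallyBoundedVariationOn f s) (hs : s.OrdConnected)
    (hus : ∀ i, u i ∈ s) : Monotone (polygonDefect f s u m) := fun _ _ hxy =>
  Finset.sum_le_sum fun i _ => monotone_chordDefect_clamp hf hs (hus i) (hus (i + 1)) hxy

lemma polygonDefect_sub_eq (hf : LocallyBoundedVariationOn f s) (hu : Monotone u)
    (hus : ∀ i, u i ∈ s) :
    polygonDefect f s u m (u m) - polygonDefect f s u m (u 0)
      = variationOnFromTo f s (u 0) (u m)
        - ∑ i ∈ Finset.range m, dist (f (u (i + 1))) (f (u i)) := by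
  rw [← variationOnFromTo.sum_range hf hus, ← Finset.sum_sub_distrib, polygonDefect,
    polygonDefect, ← Finset.sum_sub_distrib]
  refine Finset.sum_congr rfl fun i hi => ?_
  have hi : i + 1 ≤ m := Finset.mem_range.1 hi
  rw [min_eq_right (hu hi), max_eq_right (hu i.le_succ), min_eq_left (hu (Nat.zero_le _)),
    max_eq_left (hu (Nat.zero_le _)), chordDefect_self, sub_zero, chordDefect]

lemma exists_cell_of_mem_Ico {t : α} (ht : t ∈ Ico (u 0) (u m)) :
    ∃ j < m, t ∈ Ico (u j) (u (j + 1)) := by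
  induction m with
  | zero => exact absurd ht.2 (not_lt.2 ht.1)
  | succ m ih =>
    by_cases htm : t < u m
    · obtain ⟨j, hj, hjt⟩ := ih ⟨ht.1, htm⟩
      exact ⟨j, hj.trans m.lt_succ_self, hjt⟩
    · exact ⟨m, m.lt_succ_self, not_lt.1 htm, ht.2⟩

theorem variationOnFromTo_sub_le_polygonDefect_sub (hf : LocallyBoundedVariationOn f s)
    (hs : s.OrdConnected) (hus : ∀ i, u i ∈ s) {a t : α} (ha : a ∈ s)
    (ht : t ∈ Ico (u 0) (u m)) :
    ∃ c, t < c ∧ ∀ y ∈ Icc t c, variationOnFromTo f s a y - variationOnFromTo f s a t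
      ≤ polygonDefect f s u m y - polygonDefect f s u m t + dist (f y) (f t) := by
  obtain ⟨j, hj, hjt⟩ := exists_cell_of_mem_Ico ht
  have hcell : ∀ y ∈ Icc (u j) (u (j + 1)), max (u j) (min y (u (j + 1))) = y := fun y hy => by
    rw [min_eq_left hy.2, max_eq_right hy.1]
  refine ⟨u (j + 1), hjt.2, fun y hy => ?_⟩
  have hty : t ∈ Icc (u j) (u (j + 1)) := Ico_subset_Icc_self hjt
  have hyc : y ∈ Icc (u j) (u (j + 1)) := ⟨hjt.1.trans hy.1, hy.2⟩
  set term : ℕ → α → ℝ := fun i t => chordDefect f s (u i) (max (u i) (min t (u (i + 1))))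
  have hterm : chordDefect f s (u j) y - chordDefect f s (u j) t
      ≤ polygonDefect f s u m y - polygonDefect f s u m t :=
    calc chordDefect f s (u j) y - chordDefect f s (u j) t = term j y - term j t := by
          simp only [term, hcell y hyc, hcell t hty]
      _ ≤ ∑ i ∈ Finset.range m, (term i y - term i t) :=
          Finset.single_le_sum (f := fun i => term i y - term i t)
            (fun i _ => sub_nonneg.2 (monotone_chordDefect_clamp hf hs (hus i) (hus (i + 1)) hy.1))
            (Finset.mem_range.2 hj)
      _ = _ := Finset.sum_sub_distrib _ _
  linarith [variationOnFromTo_sub_le_chordDefect_sub hf ha (hus j)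
    (hs.out (hus j) (hus (j + 1)) hty) (hs.out (hus j) (hus (j + 1)) hyc) (f := f)]

end Defect

theorem BoundedVariationOn.exists_defect_seq {α : Type*} [LinearOrder α] {E : Type*}
    [PseudoMetricSpace E] {f : α → E} {a b : α} (hab : a ≤ b)
    (hf : BoundedVariationOn f (Icc a b)) :
    ∃ P : ℕ → α → ℝ, (∀ k, Monotone (P k)) ∧ Summable (fun k => P k b - P k a) ∧
      ∀ k, ∀ t ∈ Ico a b, ∃ c, t < c ∧ ∀ y ∈ Icc t c,
        variationOnFromTo f (Icc a b) a y - variationOnFromTo f (Icc a b) a t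
          ≤ P k y - P k t + dist (f y) (f t) := by
  have hloc := hf.locallyBoundedVariationOn
  choose m u hu hus hu0 hum hlt using fun k : ℕ =>
    variationOnFromTo.exists_partition_sub_sum_lt hab hf (pow_pos (half_pos one_pos) k)
  have hPmono : ∀ k, Monotone (polygonDefect f (Icc a b) (u k) (m k)) := fun k =>
    polygonDefect_monotone hloc ordConnected_Icc (hus k)
  refine ⟨fun k => polygonDefect f (Icc a b) (u k) (m k), hPmono, ?_, fun k t ht => ?_⟩
  · refine Summable.of_nonneg_of_le (fun k => sub_nonneg.2 (hPmono k hab)) (fun k => ?_)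
      summable_geometric_two
    have := polygonDefect_sub_eq (m := m k) hloc (hu k) (hus k)
    rw [hu0, hum] at this
    exact this ▸ (hlt k).le
  · rw [← hu0 k, ← hum k] at ht
    simpa only [hu0] using variationOnFromTo_sub_le_polygonDefect_sub hloc ordConnected_Icc
      (hus k) (hus k 0) ht

theorem BoundedVariationOn.ae_hasDerivAt_variationOnFromTo {E : Type*} [NormedAddCommGroup E]
    [NormedSpace ℝ E] [FiniteDimensional ℝ E] {f : ℝ → E} {a b : ℝ} (hab : a ≤ b)
    (hf : BoundedVariationOn f (Icc a b)) :
    ∀ᵐ t ∂volume.restrict (Ioo a b),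
      ∃ v, HasDerivAt f v t ∧ HasDerivAt (variationOnFromTo f (Icc a b) a) ‖v‖ t := by
  set V := variationOnFromTo f (Icc a b) a
  have hloc := hf.locallyBoundedVariationOn
  have ha : a ∈ Icc a b := left_mem_Icc.2 hab
  obtain ⟨P, hPmono, hsum, hPdom⟩ := hf.exists_defect_seq hab
  have hfdiff : ∀ᵐ x, x ∈ Icc a b → DifferentiableAt ℝ f x := by
    have hf' : BoundedVariationOn f (uIcc a b) := by rwa [uIcc_of_le hab]
    simpa only [uIcc_of_le hab] using hf'.ae_differentiableAt_of_mem_uIcc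
  filter_upwards [ae_tendsto_deriv_zero_of_summable (fun k => (hPmono k).monotoneOn _) hsum,
    ae_restrict_of_ae hfdiff, ae_restrict_of_ae
      (variationOnFromTo.monotoneOn hloc ha).ae_differentiableWithinAt_of_mem,
    ae_restrict_mem measurableSet_Ioo] with t ⟨hPdiff, hPlim⟩ hft hVt ht
  have htab : t ∈ Icc a b := Ioo_subset_Icc_self ht
  have hft := (hft htab).hasDerivAt
  have hVt := ((hVt htab).differentiableAt (Icc_mem_nhds ht.1 ht.2)).hasDerivAt
  have hlower : ‖deriv f t‖ ≤ deriv V t := by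
    refine norm_le_of_hasDerivWithinAt_Ioi hVt.hasDerivWithinAt hft.hasDerivWithinAt ?_
    filter_upwards [Ioo_mem_nhdsGT ht.2] with s hs
    have hs' : s ∈ Icc a b := ⟨ht.1.le.trans hs.1.le, hs.2.le⟩
    rw [← dist_eq_norm, variationOnFromTo.sub_right hloc ha hs' htab]
    exact variationOnFromTo.dist_le hloc htab hs' hs.1.le
  have hupper : ∀ k, deriv V t ≤ deriv (P k) t + ‖deriv f t‖ := fun k => by
    obtain ⟨c, htc, hc⟩ := hPdom k t (Ioo_subset_Ico_self ht)
    refine le_add_norm_of_hasDerivWithinAt_Ioi hVt.hasDerivWithinAt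
      (hPdiff k).hasDerivAt.hasDerivWithinAt hft.hasDerivWithinAt ?_
    filter_upwards [Ioo_mem_nhdsGT htc] with s hs
    rw [← dist_eq_norm]
    exact hc s (Ioo_subset_Icc_self hs)
  have hle : deriv V t ≤ ‖deriv f t‖ :=
    ge_of_tendsto (by simpa using hPlim.add_const ‖deriv f t‖) (Eventually.of_forall hupper)
  exact ⟨deriv f t, hft, le_antisymm hle hlower ▸ hVt⟩

theorem length_function_deriv_ae_general (n : ℕ) {a b : ℝ} (hab : a < b)
    (γ : ℝ → EuclideanSpace ℝ (Fin n))
    (hrect : eVariationOn γ (Icc a b) ≠ ⊤)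
    (lγ : ℝ → ℝ) (hl : lγ = fun t => (eVariationOn γ (Icc a t)).toReal) :
    ∀ᵐ t ∂(volume.restrict (Ioo a b)),
      ∃ v : EuclideanSpace ℝ (Fin n), HasDerivAt γ v t ∧ HasDerivAt lγ ‖v‖ t := by
  filter_upwards [BoundedVariationOn.ae_hasDerivAt_variationOnFromTo hab.le hrect,
    ae_restrict_mem measurableSet_Ioo] with t ⟨v, hγ, hV⟩ ht
  refine ⟨v, hγ, hV.congr_of_eventuallyEq ?_⟩
  filter_upwards [Ioo_mem_nhds ht.1 ht.2] with s hs
  rw [hl, variationOnFromTo.eq_of_le _ _ hs.1.le, Icc_inter_Icc, max_self, min_eq_right hs.2.le]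

/-- For a rectifiable curve `γ : [a,b] → ℝⁿ` with length function
`l_γ(t) = length of γ on [a,t]`, for almost every `t ∈ (a,b)` both `γ'(t)` and
`l_γ'(t)` exist and `l_γ'(t) = |γ'(t)|`. -/
theorem length_function_deriv_ae (n : ℕ) (hn : 1 ≤ n) {a b : ℝ} (hab : a < b)
    (γ : ℝ → EuclideanSpace ℝ (Fin n)) (hcont : ContinuousOn γ (Icc a b))
    (hrect : eVariationOn γ (Icc a b) ≠ ⊤)
    (lγ : ℝ → ℝ) (hl : lγ = fun t => (eVariationOn γ (Icc a t)).toReal) :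
    ∀ᵐ t ∂(volume.restrict (Ioo a b)),
      ∃ v : EuclideanSpace ℝ (Fin n), HasDerivAt γ v t ∧ HasDerivAt lγ ‖v‖ t :=
  length_function_deriv_ae_general n hab γ hrect lγ hl
end

section
/- Let D ⊆ ℝⁿ be open, f : D → ℝⁿ an open continuous map, x₀ ∈ D, and 0 < r < dist(x₀, ∂D). Set G₁ = B(x₀, r) \ {x₀}. Then the topological boundary of f(G₁) satisfies ∂f(G₁) ⊆ C(f, x₀) ∪ f(S(x₀, r)), where C(f, x₀) = {y : ∃ x_k ∈ G₁, x_k → x₀, f(x_k) → y} is the cluster set of f at x₀ and S(x₀, r) is the sphere of radius r about x₀. -/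
open Metric Set Filter Topology

/-- Boundary of the image of a punctured ball under an open continuous map:
`∂ f(B(x₀,r) \ {x₀}) ⊆ C(f, x₀) ∪ f(S(x₀,r))`, where `C(f,x₀)` is the cluster set of
`f` at `x₀`. -/
theorem frontier_image_punctured_ball (n : ℕ) (hn : 2 ≤ n)
    (D : Set (EuclideanSpace ℝ (Fin n))) (hD : IsOpen D)
    (f : EuclideanSpace ℝ (Fin n) → EuclideanSpace ℝ (Fin n))
    (hfc : ContinuousOn f D)
    (hfo : ∀ U ⊆ D, IsOpen U → IsOpen (f '' U))
    (x₀ : EuclideanSpace ℝ (Fin n)) (hx₀ : x₀ ∈ D)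
    (r : ℝ) (hr : 0 < r) (hrD : closedBall x₀ r ⊆ D) :
    frontier (f '' (ball x₀ r \ {x₀}))
      ⊆ {y : EuclideanSpace ℝ (Fin n) |
            ∃ xk : ℕ → EuclideanSpace ℝ (Fin n),
              (∀ k, xk k ∈ ball x₀ r \ {x₀})
              ∧ Tendsto xk atTop (nhds x₀)
              ∧ Tendsto (fun k => f (xk k)) atTop (nhds y)}
        ∪ f '' (sphere x₀ r) := by
  set G₁ : Set (EuclideanSpace ℝ (Fin n)) := ball x₀ r \ {x₀} with hG₁
  have hG₁D : G₁ ⊆ D := fun x hx => hrD (ball_subset_closedBall hx.1)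
  have hG₁o : IsOpen G₁ := isOpen_ball.sdiff isClosed_singleton
  have himg : IsOpen (f '' G₁) := hfo G₁ hG₁D hG₁o
  intro y hy
  rw [himg.frontier_eq] at hy
  obtain ⟨hycl, hynot⟩ := hy
  obtain ⟨yk, hyk, hyklim⟩ := mem_closure_iff_seq_limit.1 hycl
  choose xk hxk hfxk using hyk
  obtain ⟨x, hxcb, φ, hφ, hxlim⟩ :=
    (isCompact_closedBall x₀ r).tendsto_subseq
      (fun k => ball_subset_closedBall (hxk k).1)
  have hflim : Tendsto (fun k => f (xk (φ k))) atTop (nhds y) := by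
    have : Tendsto (fun k => yk (φ k)) atTop (nhds y) :=
      hyklim.comp hφ.tendsto_atTop
    simpa only [hfxk] using this
  rcases eq_or_ne x x₀ with hx0 | hx0
  · left
    exact ⟨fun k => xk (φ k), fun k => hxk (φ k), hx0 ▸ hxlim, hflim⟩
  · have hxD : x ∈ D := hrD hxcb
    have hcont : ContinuousAt f x := hfc.continuousAt (hD.mem_nhds hxD)
    have hfx : Tendsto (fun k => f (xk (φ k))) atTop (nhds (f x)) :=
      hcont.tendsto.comp hxlim
    have hyfx : f x = y := tendsto_nhds_unique hfx hflim
    rcases eq_or_lt_of_le (mem_closedBall.1 hxcb) with hsph | hlt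
    · right
      exact ⟨x, mem_sphere.2 hsph, hyfx⟩
    · exact absurd ⟨x, ⟨mem_ball.2 hlt, hx0⟩, hyfx⟩ hynot
end

section
/- Let n ≥ 3, n−1 < α ≤ n, 0 < ε₀ < 1, and let q₀ : (0, 1) → (0, ∞) be measurable with ∫_0^{ε₀} dt/(t^{(n−1)/(α−1)} q₀(t)^{1/(α−1)}) < ∞. Define ρ : (0, 1] → ℝ by ρ(s) = (1 + ((n−α)/(α−1)) ∫_s^1 dt/(t^{(n−1)/(α−1)} q₀(t)^{1/(α−1)}))^{(α−1)/(α−n)} when α < n. Then ρ is nondecreasing, 0 < ρ(s) ≤ 1 for all s, and lim_{s→0⁺} ρ(s) = (1 + ((n−α)/(α−1)) ∫_0^1 dt/(t^{(n−1)/(α−1)} q₀(t)^{1/(α−1)}))^{(α−1)/(α−n)} > 0; in particular the radial map f(x) = (x/|x|)ρ(|x|) on Bⁿ \ {0} has cluster set at 0 equal to the sphere of radius lim_{s→0} ρ(s) > 0 and thus does not extend continuously to 0 as a map into ℝⁿ with f(0)=0 being a limit. -/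
/-!
Since `g ≥ 0` is integrable on `(0, 1]`, the tail integral `s ↦ ∫_s^1 g` is antitone and tends
to `∫_0^1 g < ∞` as `s → 0⁺`, while `x ↦ (1 + c x)^e` with `c = (n - α)/(α - 1) ≥ 0` and
`e = (α - 1)/(α - n) ≤ 0` is antitone on `[0, ∞)` with values in `(0, 1]`; hence `ρ` is
monotone and tends to `L > 0`. The radial map satisfies `‖f x‖ = ρ ‖x‖`, so its cluster values
at `0` lie on the sphere of radius `L`, and approaching `0` along the ray through a point `y` of
that sphere shows that each such `y` is one. Antipodal points of this sphere are then two
distinct cluster values, so `f` has no limit at `0`.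
-/

open Set Metric Filter Topology MeasureTheory

section TailIntegral

variable {g : ℝ → ℝ} {a b : ℝ}

theorem tendsto_setIntegral_Ioc_nhdsGT (hg : IntegrableOn g (Ioc a b)) (hab : a < b) :
    Tendsto (fun s => ∫ t in Ioc s b, g t) (𝓝[>] a) (𝓝 (∫ t in Ioc a b, g t)) := by
  have hIcc : IntegrableOn g (uIcc a b) := by
    rwa [uIcc_of_le hab.le, integrableOn_Icc_iff_integrableOn_Ioc]
  have hcont := intervalIntegral.continuousOn_primitive_interval_left hIcc a left_mem_uIcc
  have hle : 𝓝[>] a ≤ 𝓝[uIcc a b] a := by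
    rw [← nhdsWithin_Ioc_eq_nhdsGT hab, uIcc_of_le hab.le]
    exact nhdsWithin_mono _ Ioc_subset_Icc_self
  have hlim := hcont.tendsto.mono_left hle
  rw [intervalIntegral.integral_of_le hab.le] at hlim
  refine hlim.congr' ?_
  filter_upwards [Ioc_mem_nhdsGT hab] with s hs
  exact intervalIntegral.integral_of_le hs.2

theorem antitoneOn_setIntegral_Ioc (hg : IntegrableOn g (Ioc a b))
    (hg_nonneg : ∀ t ∈ Ioc a b, 0 ≤ g t) :
    AntitoneOn (fun s => ∫ t in Ioc s b, g t) (Ici a) := by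
  intro s₁ hs₁ s₂ _ h12
  refine setIntegral_mono_set (hg.mono_set (Ioc_subset_Ioc_left hs₁)) ?_
    (Ioc_subset_Ioc_left h12).eventuallyLE
  refine (ae_restrict_iff' measurableSet_Ioc).2 (.of_forall fun t ht => ?_)
  exact hg_nonneg t ⟨hs₁.trans_lt ht.1, ht.2⟩

end TailIntegral

section PowerProfile

variable {c e x : ℝ}

theorem one_le_one_add_mul (hc : 0 ≤ c) (hx : 0 ≤ x) : 1 ≤ 1 + c * x := by
  nlinarith

theorem antitoneOn_one_add_mul_rpow (hc : 0 ≤ c) (he : e ≤ 0) :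
    AntitoneOn (fun x => (1 + c * x) ^ e) (Ici 0) := fun x hx _ _ hxy =>
  Real.rpow_le_rpow_of_nonpos (by linarith [one_le_one_add_mul hc hx]) (by nlinarith) he

theorem one_add_mul_rpow_mem_Ioc (hc : 0 ≤ c) (hx : 0 ≤ x) (he : e ≤ 0) :
    (1 + c * x) ^ e ∈ Ioc 0 1 :=
  ⟨Real.rpow_pos_of_pos (by linarith [one_le_one_add_mul hc hx]) e,
    Real.rpow_le_one_of_one_le_of_nonpos (one_le_one_add_mul hc hx) he⟩

theorem continuousAt_one_add_mul_rpow (hc : 0 ≤ c) (hx : 0 ≤ x) :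
    ContinuousAt (fun x => (1 + c * x) ^ e) x :=
  (continuous_const.add (continuous_const.mul continuous_id)).continuousAt.rpow_const
    (.inl (zero_lt_one.trans_le (one_le_one_add_mul hc hx)).ne')

end PowerProfile

section ClusterSet

variable {E F : Type*} [TopologicalSpace E] [TopologicalSpace F]

def seqClusterSet (f : E → F) (s : Set E) (a : E) : Set F :=
  {y | ∃ x : ℕ → E, (∀ k, x k ∈ s) ∧ Tendsto x atTop (𝓝 a) ∧ Tendsto (f ∘ x) atTop (𝓝 y)}

theorem seqClusterSet_subset_singleton [T2Space F] {f : E → F} {s : Set E} {a : E} {y : F}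
    (hf : Tendsto f (𝓝[s] a) (𝓝 y)) : seqClusterSet f s a ⊆ {y} := by
  rintro z ⟨x, hxs, hxa, hfx⟩
  exact tendsto_nhds_unique hfx
    (hf.comp (tendsto_nhdsWithin_iff.2 ⟨hxa, .of_forall hxs⟩))

theorem mem_seqClusterSet_of_tendsto {ι : Type*} {l : Filter ι} [l.IsCountablyGenerated]
    [l.NeBot] {f : E → F} {s : Set E} {a : E} {y : F} {φ : ι → E}
    (hφ : Tendsto φ l (𝓝[s] a)) (hf : Tendsto (f ∘ φ) l (𝓝 y)) : y ∈ seqClusterSet f s a := by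
  obtain ⟨u, hu⟩ := l.exists_seq_tendsto
  obtain ⟨N, hN⟩ := eventually_atTop.1 (hu.eventually (tendsto_nhdsWithin_iff.1 hφ).2)
  have hshift : Tendsto (fun k => u (k + N)) atTop l := hu.comp (tendsto_add_atTop_nat N)
  exact ⟨fun k => φ (u (k + N)), fun k => hN _ (Nat.le_add_left N k),
    (tendsto_nhdsWithin_iff.1 hφ).1.comp hshift, hf.comp hshift⟩

end ClusterSet

section RadialMap

variable {E : Type*} [NormedAddCommGroup E] [NormedSpace ℝ E] {ρ : ℝ → ℝ} {L : ℝ}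

noncomputable def radialMap (ρ : ℝ → ℝ) (x : E) : E := (ρ ‖x‖ / ‖x‖) • x

theorem norm_radialMap {x : E} (hx : x ≠ 0) : ‖radialMap ρ x‖ = |ρ ‖x‖| := by
  rw [radialMap, norm_smul, Real.norm_eq_abs, abs_div, abs_norm,
    div_mul_cancel₀ _ (norm_ne_zero_iff.2 hx)]

theorem norm_div_smul_of_norm_eq {y : E} (hy : ‖y‖ = L) (hL : 0 < L) {t : ℝ} (ht : 0 ≤ t) :
    ‖(t / L) • y‖ = t := by
  rw [norm_smul, Real.norm_eq_abs, abs_of_nonneg (div_nonneg ht hL.le), hy,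
    div_mul_cancel₀ _ hL.ne']

theorem radialMap_smul_of_norm_eq {y : E} (hy : ‖y‖ = L) (hL : 0 < L) {t : ℝ} (ht : 0 < t) :
    radialMap ρ ((t / L) • y) = (ρ t / L) • y := by
  rw [radialMap, norm_div_smul_of_norm_eq hy hL ht.le, smul_smul]
  congr 1
  field_simp

theorem seqClusterSet_radialMap (hρ : Tendsto ρ (𝓝[>] 0) (𝓝 L)) (hL : 0 < L) :
    seqClusterSet (radialMap ρ) (ball (0 : E) 1 \ {0}) 0 = sphere 0 L := by
  ext y
  rw [mem_sphere_zero_iff_norm]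
  constructor
  · rintro ⟨x, hxs, hx0, hfx⟩
    have hnorm : Tendsto (fun k => ‖x k‖) atTop (𝓝[>] 0) :=
      tendsto_nhdsWithin_iff.2
        ⟨by simpa using hx0.norm, .of_forall fun k => norm_pos_iff.2 (hxs k).2⟩
    have hlim : Tendsto (fun k => ‖radialMap ρ (x k)‖) atTop (𝓝 L) := by
      have := (hρ.comp hnorm).abs
      rw [abs_of_pos hL] at this
      exact this.congr fun k => (norm_radialMap (hxs k).2).symm
    exact tendsto_nhds_unique hfx.norm hlim
  · intro hy
    have hray : Tendsto (fun t : ℝ => (t / L) • y) (𝓝[>] 0) (𝓝[ball (0 : E) 1 \ {0}] 0) := by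
      refine tendsto_nhdsWithin_iff.2 ⟨?_, ?_⟩
      · have hcont : Continuous fun t : ℝ => (t / L) • y := by fun_prop
        simpa using hcont.continuousWithinAt.tendsto (s := Ioi 0) (x := 0)
      · filter_upwards [Ioo_mem_nhdsGT one_pos] with t ht
        rw [Set.mem_sdiff, mem_ball_zero_iff, mem_singleton_iff, ← norm_eq_zero,
          norm_div_smul_of_norm_eq hy hL ht.1.le]
        exact ⟨ht.2, ht.1.ne'⟩
    have hlim := (hρ.div_const L).smul_const y
    rw [div_self hL.ne', one_smul] at hlim
    refine mem_seqClusterSet_of_tendsto hray (hlim.congr' ?_)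
    filter_upwards [self_mem_nhdsWithin] with t ht
    exact (radialMap_smul_of_norm_eq hy hL ht).symm

theorem not_exists_tendsto_radialMap [Nontrivial E] (hρ : Tendsto ρ (𝓝[>] 0) (𝓝 L))
    (hL : 0 < L) : ¬ ∃ y, Tendsto (radialMap ρ) (𝓝[≠] (0 : E)) (𝓝 y) := by
  rintro ⟨y, hy⟩
  have hsub : sphere (0 : E) L ⊆ {y} := by
    rw [← seqClusterSet_radialMap hρ hL]
    exact seqClusterSet_subset_singleton (hy.mono_left (nhdsWithin_mono _ (sdiff_subset_compl _ _)))
  obtain ⟨v⟩ := NormedSpace.sphere_nonempty_rclike ℝ (E := E) hL.le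
  exact ne_neg_of_mem_sphere ℝ hL.ne' v (Subtype.ext ((hsub v.2).trans (hsub (-v).2).symm))

end RadialMap

theorem radial_map_cluster_set_sphere_general (n : ℕ) (hn : 3 ≤ n) (α : ℝ)
    (hα1 : (n : ℝ) - 1 < α) (hα2 : α < n)
    (q₀ : ℝ → ℝ) (hq₀ : ∀ t ∈ Ioc (0 : ℝ) 1, 0 < q₀ t)
    (g : ℝ → ℝ)
    (hgdef : g = fun t => (t ^ (((n : ℝ) - 1) / (α - 1)) * q₀ t ^ ((1 : ℝ) / (α - 1)))⁻¹)
    (hInt : IntegrableOn g (Ioc (0 : ℝ) 1) volume)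
    (ρ : ℝ → ℝ)
    (hρdef : ρ = fun s =>
      (1 + (((n : ℝ) - α) / (α - 1)) * ∫ t in Ioc s 1, g t) ^ ((α - 1) / (α - (n : ℝ))))
    (L : ℝ)
    (hL : L = (1 + (((n : ℝ) - α) / (α - 1)) * ∫ t in Ioc (0 : ℝ) 1, g t)
        ^ ((α - 1) / (α - (n : ℝ))))
    (f : EuclideanSpace ℝ (Fin n) → EuclideanSpace ℝ (Fin n))
    (hf : f = fun x => (ρ ‖x‖ / ‖x‖) • x) :
    MonotoneOn ρ (Ioc (0 : ℝ) 1)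
    ∧ (∀ s ∈ Ioc (0 : ℝ) 1, 0 < ρ s ∧ ρ s ≤ 1)
    ∧ Tendsto ρ (nhdsWithin 0 (Ioi 0)) (nhds L)
    ∧ 0 < L
    ∧ {y : EuclideanSpace ℝ (Fin n) |
        ∃ xk : ℕ → EuclideanSpace ℝ (Fin n),
          (∀ k, xk k ∈ ball (0 : EuclideanSpace ℝ (Fin n)) 1 \ {0})
          ∧ Tendsto xk atTop (nhds 0) ∧ Tendsto (fun k => f (xk k)) atTop (nhds y)}
        = sphere (0 : EuclideanSpace ℝ (Fin n)) L
    ∧ ¬ ∃ y : EuclideanSpace ℝ (Fin n),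
        Tendsto f (nhdsWithin 0 {(0 : EuclideanSpace ℝ (Fin n))}ᶜ) (nhds y) := by
  have hn3 : (3 : ℝ) ≤ n := by exact_mod_cast hn
  set c := ((n : ℝ) - α) / (α - 1)
  set e := (α - 1) / (α - (n : ℝ))
  have hc : 0 ≤ c := div_nonneg (by linarith) (by linarith)
  have he : e ≤ 0 := div_nonpos_of_nonneg_of_nonpos (by linarith) (by linarith)
  have hg : ∀ t ∈ Ioc (0 : ℝ) 1, 0 ≤ g t := fun t ht => by
    rw [hgdef]
    exact inv_nonneg.2 (mul_nonneg (Real.rpow_nonneg ht.1.le _) (Real.rpow_nonneg (hq₀ t ht).le _))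
  set I := fun s => ∫ t in Ioc s 1, g t
  have hI : MapsTo I (Ici 0) (Ici 0) := fun s hs =>
    setIntegral_nonneg measurableSet_Ioc fun t ht => hg t ⟨lt_of_le_of_lt hs ht.1, ht.2⟩
  have hρI : ρ = (fun x => (1 + c * x) ^ e) ∘ I := hρdef
  have hρ_lim : Tendsto ρ (𝓝[>] 0) (𝓝 L) := by
    rw [hρI, hL]
    exact (continuousAt_one_add_mul_rpow hc (hI self_mem_Ici)).tendsto.comp
      (tendsto_setIntegral_Ioc_nhdsGT hInt one_pos)
  have hL_pos : 0 < L := hL ▸ (one_add_mul_rpow_mem_Ioc hc (hI self_mem_Ici) he).1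
  have : Nonempty (Fin n) := ⟨⟨0, by omega⟩⟩
  subst hf
  refine ⟨?_, fun s hs => hρI ▸ one_add_mul_rpow_mem_Ioc hc (hI hs.1.le) he, hρ_lim, hL_pos,
    seqClusterSet_radialMap hρ_lim hL_pos, not_exists_tendsto_radialMap hρ_lim hL_pos⟩
  have hIoc : Ioc (0 : ℝ) 1 ⊆ Ici 0 := fun s hs => hs.1.le
  rw [hρI]
  exact (antitoneOn_one_add_mul_rpow hc he).comp
    ((antitoneOn_setIntegral_Ioc hInt hg).mono hIoc) (hI.mono_left hIoc)

/-- Non-removability example: for `n-1 < α < n` and a positive measurable `q₀` with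
`∫_0 dt/(t^{(n-1)/(α-1)} q₀(t)^{1/(α-1)}) < ∞`, the function
`ρ(s) = (1 + ((n-α)/(α-1))∫_s^1 dt/(t^{(n-1)/(α-1)} q₀(t)^{1/(α-1)}))^{(α-1)/(α-n)}`
is nondecreasing with `0 < ρ ≤ 1`, has positive limit `L` as `s → 0⁺`, and the radial
map `f(x) = (x/|x|)ρ(|x|)` has cluster set at `0` equal to the sphere of radius `L`;
in particular `f` has no limit at `0`. -/
theorem radial_map_cluster_set_sphere (n : ℕ) (hn : 3 ≤ n) (α : ℝ)
    (hα1 : (n : ℝ) - 1 < α) (hα2 : α < n)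
    (q₀ : ℝ → ℝ) (hq₀m : Measurable q₀) (hq₀ : ∀ t ∈ Ioc (0 : ℝ) 1, 0 < q₀ t)
    (g : ℝ → ℝ)
    (hgdef : g = fun t => (t ^ (((n : ℝ) - 1) / (α - 1)) * q₀ t ^ ((1 : ℝ) / (α - 1)))⁻¹)
    (hInt : IntegrableOn g (Ioc (0 : ℝ) 1) volume)
    (ρ : ℝ → ℝ)
    (hρdef : ρ = fun s =>
      (1 + (((n : ℝ) - α) / (α - 1)) * ∫ t in Ioc s 1, g t) ^ ((α - 1) / (α - (n : ℝ))))
    (L : ℝ)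
    (hL : L = (1 + (((n : ℝ) - α) / (α - 1)) * ∫ t in Ioc (0 : ℝ) 1, g t)
        ^ ((α - 1) / (α - (n : ℝ))))
    (f : EuclideanSpace ℝ (Fin n) → EuclideanSpace ℝ (Fin n))
    (hf : f = fun x => (ρ ‖x‖ / ‖x‖) • x) :
    MonotoneOn ρ (Ioc (0 : ℝ) 1)
    ∧ (∀ s ∈ Ioc (0 : ℝ) 1, 0 < ρ s ∧ ρ s ≤ 1)
    ∧ Tendsto ρ (nhdsWithin 0 (Ioi 0)) (nhds L)
    ∧ 0 < L
    ∧ {y : EuclideanSpace ℝ (Fin n) |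
        ∃ xk : ℕ → EuclideanSpace ℝ (Fin n),
          (∀ k, xk k ∈ ball (0 : EuclideanSpace ℝ (Fin n)) 1 \ {0})
          ∧ Tendsto xk atTop (nhds 0) ∧ Tendsto (fun k => f (xk k)) atTop (nhds y)}
        = sphere (0 : EuclideanSpace ℝ (Fin n)) L
    ∧ ¬ ∃ y : EuclideanSpace ℝ (Fin n),
        Tendsto f (nhdsWithin 0 {(0 : EuclideanSpace ℝ (Fin n))}ᶜ) (nhds y) :=
  radial_map_cluster_set_sphere_general n hn α hα1 hα2 q₀ hq₀ g hgdef hInt ρ hρdef L hL f hf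
end
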